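/- arXiv:1809.06236 — 3 statements merged into one kernel-verified Lean document; each statement's English description precedes it below -/
import Mathlib

section
/- Let R be a discrete valuation ring with uniformizer π, let A be an R-algebra with no π-torsion, let I be an ideal of A with π ∈ I, and let A^C be the A-subalgebra of A[1/π] generated by { a/π : a ∈ I }. Then for every R-algebra B with no π-torsion and every R-algebra homomorphism v : A → B such that v(I) ⊆ πB, there exists a unique R-algebra homomorphism v′ : A^C → B whose composition with the inclusion A → A^C equals v. -/
/-!
Since `B` has no `π`-torsion, it embeds into `B[1/π]`, and `v` extends to
`A[1/π] → B[1/π]`. The hypothesis `v(I) ⊆ πB` says exactly that every generator `a/π` of `A^C`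
is sent into `B`, so the extension restricts to a map `A^C → B`. Two maps `A^C → B` agreeing on
`A` agree on each `a/π` after multiplication by `π`, which is cancellable in `B`.
-/

open nonZeroDivisors

section Dilatation

variable {R A B : Type*} [CommRing R] [CommRing A] [Algebra R A] [CommRing B] [Algebra R B]

/-- The affine dilatation `A[I/t]`: a generator `x` with `t * x = a` is the fraction `a / t`. -/
def dilatation (t : A) (I : Ideal A) : Subalgebra A (Localization.Away t) :=
  Algebra.adjoin A {x | ∃ a ∈ I, algebraMap A _ t * x = algebraMap A _ a}

theorem dilatation.ringHom_ext {t : A} {I : Ideal A} {f g : dilatation t I →+* B}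
    (ht : f (algebraMap A _ t) ∈ B⁰)
    (hfg : ∀ a, f (algebraMap A _ a) = g (algebraMap A _ a)) : f = g := by
  ext ⟨x, hx⟩
  induction hx using Algebra.adjoin_induction with
  | mem x hx =>
    have ⟨a, _, hxa⟩ := hx
    have hxa' : algebraMap A (dilatation t I) t * ⟨x, Algebra.subset_adjoin hx⟩ =
        algebraMap A _ a := Subtype.ext hxa
    refine sub_eq_zero.mp (mem_nonZeroDivisors_iff_left.mp ht _ ?_)
    rw [mul_sub, ← map_mul, hxa', hfg t, ← map_mul, hxa', hfg, sub_self]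
  | algebraMap a => exact hfg a
  | add x y hx' hy' hx hy =>
    change f (⟨x, hx'⟩ + ⟨y, hy'⟩) = g (⟨x, hx'⟩ + ⟨y, hy'⟩)
    rw [map_add, map_add, hx, hy]
  | mul x y hx' hy' hx hy =>
    change f (⟨x, hx'⟩ * ⟨y, hy'⟩) = g (⟨x, hx'⟩ * ⟨y, hy'⟩)
    rw [map_mul, map_mul, hx, hy]

theorem injective_algebraMap_away {s : B} (hs : s ∈ B⁰) :
    Function.Injective (algebraMap B (Localization.Away s)) :=
  IsLocalization.injective _ (Submonoid.powers_le.mpr hs)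

variable (v : A →ₐ[R] B) {t : A}

theorem awayMapₐ_algebraMap (a : A) :
    Localization.awayMapₐ v t (algebraMap A _ a) = algebraMap B _ (v a) := by
  simp [IsLocalization.Away.map, IsLocalization.map_eq]

theorem awayMapₐ_mem_range_of_mem_dilatation {I : Ideal A} (hv : ∀ a ∈ I, v t ∣ v a)
    {x : Localization.Away t} (hx : x ∈ dilatation t I) :
    Localization.awayMapₐ v t x ∈ (IsScalarTower.toAlgHom R B (Localization.Away (v t))).range := by
  induction hx using Algebra.adjoin_induction with
  | mem x hx =>
    obtain ⟨a, ha, hxa⟩ := hx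
    obtain ⟨b, hb⟩ := hv a ha
    refine ⟨b, (IsLocalization.Away.algebraMap_isUnit (v t)).mul_left_cancel ?_⟩
    change algebraMap B _ (v t) * algebraMap B _ b = _
    rw [← map_mul, ← hb, ← awayMapₐ_algebraMap, ← awayMapₐ_algebraMap, ← map_mul, hxa]
  | algebraMap a => exact ⟨v a, (awayMapₐ_algebraMap v a).symm⟩
  | add x y _ _ hx hy => rw [map_add]; exact add_mem hx hy
  | mul x y _ _ hx hy => rw [map_mul]; exact mul_mem hx hy

variable {I : Ideal A} (ht : v t ∈ B⁰) (hv : ∀ a ∈ I, v t ∣ v a)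

noncomputable def dilatation.lift : dilatation t I →ₐ[R] B :=
  (AlgEquiv.ofInjective (IsScalarTower.toAlgHom R B (Localization.Away (v t)))
    (injective_algebraMap_away ht)).symm.toAlgHom.comp
    (((Localization.awayMapₐ v t).comp ((dilatation t I).val.restrictScalars R)).codRestrict _
      fun x => awayMapₐ_mem_range_of_mem_dilatation v hv x.2)

theorem dilatation.algebraMap_lift (x : dilatation t I) :
    algebraMap B _ (lift v ht hv x) = Localization.awayMapₐ v t x :=
  congrArg Subtype.val
    ((AlgEquiv.ofInjective _ (injective_algebraMap_away ht)).apply_symm_apply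
      ⟨_, awayMapₐ_mem_range_of_mem_dilatation v hv x.2⟩)

theorem dilatation.lift_algebraMap (a : A) : lift v ht hv (algebraMap A _ a) = v a :=
  injective_algebraMap_away ht <| by
    rw [algebraMap_lift, Subalgebra.coe_algebraMap, awayMapₐ_algebraMap]

end Dilatation

theorem neron_blowup_universal_property_general
    (R : Type*) [CommRing R]
    (π : R)
    (A : Type*) [CommRing A] [Algebra R A]
    (I : Ideal A)
    (AC : Subalgebra A (Localization.Away (algebraMap R A π)))
    (hAC : AC = Algebra.adjoin A
      { x : Localization.Away (algebraMap R A π) | ∃ a ∈ I,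
        algebraMap A (Localization.Away (algebraMap R A π)) (algebraMap R A π) * x =
          algebraMap A (Localization.Away (algebraMap R A π)) a })
    (B : Type*) [CommRing B] [Algebra R B]
    (hB : ∀ b : B, algebraMap R B π * b = 0 → b = 0)
    (v : A →ₐ[R] B)
    (hv : ∀ a ∈ I, ∃ b : B, v a = algebraMap R B π * b) :
    ∃! v' : AC →ₐ[R] B, ∀ a : A, v' (algebraMap A AC a) = v a := by
  obtain rfl : AC = dilatation (algebraMap R A π) I := hAC
  have hπB : v (algebraMap R A π) ∈ B⁰ := by
    rw [v.commutes]
    exact mem_nonZeroDivisors_iff_left.mpr hB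
  have hvI : ∀ a ∈ I, v (algebraMap R A π) ∣ v a := by
    rw [v.commutes]
    exact hv
  refine ⟨dilatation.lift v hπB hvI, dilatation.lift_algebraMap v hπB hvI, fun w hw => ?_⟩
  refine AlgHom.coe_ringHom_injective (dilatation.ringHom_ext ?_ fun a => ?_)
  · change w _ ∈ B⁰
    rwa [hw]
  · change w _ = dilatation.lift v hπB hvI _
    rw [hw, dilatation.lift_algebraMap]

/-- universal property of the Néron blow up.  Let `R` be a discrete valuation
ring with uniformizer `π`, let `A` be an `R`-algebra with no `π`-torsion, let `I` be an ideal of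
`A` with `π ∈ I`, and let `A^C` be the `A`-subalgebra of `A[1/π]` generated by
`{ a/π : a ∈ I }`.  Then for every `R`-algebra `B` with no `π`-torsion and every `R`-algebra
homomorphism `v : A → B` such that `v(I) ⊆ πB`, there exists a unique `R`-algebra homomorphism
`v′ : A^C → B` whose composition with the inclusion `A → A^C` equals `v`. -/
theorem neron_blowup_universal_property
    (R : Type*) [CommRing R] [IsDomain R] [IsDiscreteValuationRing R]
    (π : R) (hπ : Irreducible π)
    (A : Type*) [CommRing A] [Algebra R A]
    (hA : ∀ a : A, algebraMap R A π * a = 0 → a = 0)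
    (I : Ideal A) (hI : algebraMap R A π ∈ I)
    (AC : Subalgebra A (Localization.Away (algebraMap R A π)))
    (hAC : AC = Algebra.adjoin A
      { x : Localization.Away (algebraMap R A π) | ∃ a ∈ I,
        algebraMap A (Localization.Away (algebraMap R A π)) (algebraMap R A π) * x =
          algebraMap A (Localization.Away (algebraMap R A π)) a })
    (B : Type*) [CommRing B] [Algebra R B]
    (hB : ∀ b : B, algebraMap R B π * b = 0 → b = 0)
    (v : A →ₐ[R] B)
    (hv : ∀ a ∈ I, ∃ b : B, v a = algebraMap R B π * b) :
    ∃! v' : AC →ₐ[R] B, ∀ a : A, v' (algebraMap A AC a) = v a :=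
  neron_blowup_universal_property_general R π A I AC hAC B hB v hv
end

section
/- Let R be a discrete valuation ring of characteristic p > 0 (p prime) with uniformizer π, fraction field K and residue field k, and set C′ := R[z]/(π^{p−1} z^p − z). Then: (1) C′ has no π-torsion (so C′ is flat over R); (2) the generic fibre K ⊗_R C′ has dimension p as a K-vector space; (3) the special fibre k ⊗_R C′ = C′/πC′ is isomorphic to k as a k-algebra; and (4) C′ is NOT finitely generated as an R-module. (Thus the R-group scheme M = Spec C′ of Example 2.3 is flat and quasi-finite but not finite over R.) -/
open Polynomial
open scoped TensorProduct

/-!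
The linear coefficient of `π ^ (p - 1) * z ^ p - z` is `-1`, so `π` does not divide it, and since
`π` stays prime in `R[z]` it is a non-zero-divisor on `C′`. The polynomial has degree `p` over `K`
and becomes `-z` over `k`, so the two fibres have ranks `p` and `1`. A finite torsion-free module
over a DVR is free, and then both fibres would have its rank.
-/

namespace AdjoinRoot

variable {R : Type*} [CommRing R]

noncomputable def tensorAlgEquivMap (T : Type*) [CommRing T] [Algebra R T] (f : R[X]) :
    T ⊗[R] AdjoinRoot f ≃ₐ[T] AdjoinRoot (f.map (algebraMap R T)) :=
  (tensorAlgEquiv f _ rfl).trans <|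
    mapAlgEquiv (Algebra.TensorProduct.rid R T T) _ _ <| by
      rw [Polynomial.map_map]
      convert Associated.refl _ using 2
      ext
      simp [Algebra.smul_def]

theorem isSMulRegular_of_not_C_dvd [IsDomain R] {π : R} (hπ : Prime π) {f : R[X]}
    (hf : ¬ C π ∣ f) : IsSMulRegular (AdjoinRoot f) π := by
  refine .of_right_eq_zero_of_smul fun c hc => ?_
  obtain ⟨g, rfl⟩ := mk_surjective c
  rw [Algebra.smul_def, algebraMap_eq, ← mk_C, ← map_mul, mk_eq_zero] at hc
  obtain ⟨a, ha⟩ := hc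
  obtain ⟨b, rfl⟩ := ((prime_C_iff.mpr hπ).dvd_or_dvd ⟨g, ha.symm⟩).resolve_left hf
  rw [mk_eq_zero]
  refine ⟨b, mul_left_cancel₀ (C_ne_zero.mpr hπ.ne_zero) ?_⟩
  rw [ha, mul_left_comm]

end AdjoinRoot

theorem IsDiscreteValuationRing.isTorsionFree_of_isSMulRegular {R M : Type*} [CommRing R]
    [IsDomain R] [IsDiscreteValuationRing R] [AddCommGroup M] [Module R M] {π : R}
    (hπ : Irreducible π) (h : IsSMulRegular M π) : Module.IsTorsionFree R M := by
  refine .of_smul_eq_zero fun a m ham => or_iff_not_imp_left.mpr fun ha => ?_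
  obtain ⟨n, u, rfl⟩ := eq_unit_mul_pow_irreducible ha hπ
  exact ((u.isSMulRegular M).mul (h.pow n)).right_eq_zero_of_smul ham

theorem Module.not_finite_of_finrank_baseChange_ne {R M : Type*} [CommRing R] [IsDomain R]
    [IsPrincipalIdealRing R] [AddCommGroup M] [Module R M] [Module.IsTorsionFree R M]
    (S T : Type*) [CommRing S] [Nontrivial S] [Algebra R S] [CommRing T] [Nontrivial T]
    [Algebra R T] (h : finrank S (S ⊗[R] M) ≠ finrank T (T ⊗[R] M)) : ¬ Module.Finite R M := by
  intro
  rw [finrank_baseChange, finrank_baseChange] at h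
  exact h rfl

namespace Polynomial

variable {R : Type*} [CommRing R]

theorem natDegree_C_mul_X_pow_sub_X {a : R} (ha : a ≠ 0) {n : ℕ} (hn : 1 < n) :
    (C a * X ^ n - X).natDegree = n := by
  nontriviality R
  rw [natDegree_sub_eq_left_of_natDegree_lt] <;> rw [natDegree_C_mul_X_pow _ _ ha]
  rwa [natDegree_X]

theorem not_C_dvd_C_mul_X_pow_sub_X {π : R} (hπ : ¬ IsUnit π) (a : R) {n : ℕ} (hn : n ≠ 1) :
    ¬ C π ∣ C a * X ^ n - X := by
  rw [C_dvd_iff_dvd_coeff]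
  intro h
  have h1 := h 1
  rw [coeff_sub, coeff_C_mul_X_pow, if_neg (Ne.symm hn), coeff_X_one, zero_sub, dvd_neg] at h1
  exact hπ (isUnit_of_dvd_one h1)

end Polynomial

theorem quasifinite_group_scheme_M_general
    (R : Type*) [CommRing R] [IsDomain R] [IsDiscreteValuationRing R]
    (p : ℕ) [Fact p.Prime]
    (π : R) (hπ : Irreducible π) :
    (∀ c : Polynomial R ⧸ Ideal.span ({C (π ^ (p - 1)) * X ^ p - X} : Set (Polynomial R)),
      algebraMap R
        (Polynomial R ⧸ Ideal.span ({C (π ^ (p - 1)) * X ^ p - X} : Set (Polynomial R))) π * c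
          = 0 → c = 0) ∧
    Module.finrank (FractionRing R)
      ((FractionRing R) ⊗[R]
        (Polynomial R ⧸ Ideal.span ({C (π ^ (p - 1)) * X ^ p - X} : Set (Polynomial R)))) = p ∧
    Nonempty
      (((IsLocalRing.ResidueField R) ⊗[R]
          (Polynomial R ⧸ Ideal.span ({C (π ^ (p - 1)) * X ^ p - X} : Set (Polynomial R))))
        ≃ₐ[IsLocalRing.ResidueField R] (IsLocalRing.ResidueField R)) ∧
    ¬ Module.Finite R
        (Polynomial R ⧸ Ideal.span ({C (π ^ (p - 1)) * X ^ p - X} : Set (Polynomial R))) := by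
  set f : R[X] := C (π ^ (p - 1)) * X ^ p - X
  set K := FractionRing R
  set k := IsLocalRing.ResidueField R
  change (∀ c : AdjoinRoot f, algebraMap R (AdjoinRoot f) π * c = 0 → c = 0) ∧
    Module.finrank K (K ⊗[R] AdjoinRoot f) = p ∧ Nonempty (k ⊗[R] AdjoinRoot f ≃ₐ[k] k) ∧
    ¬ Module.Finite R (AdjoinRoot f)
  have hp : 1 < p := (Fact.out : p.Prime).one_lt
  have regular : IsSMulRegular (AdjoinRoot f) π :=
    AdjoinRoot.isSMulRegular_of_not_C_dvd hπ.prime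
      (not_C_dvd_C_mul_X_pow_sub_X hπ.not_isUnit _ hp.ne')
  have generic : Module.finrank K (K ⊗[R] AdjoinRoot f) = p := by
    rw [(AdjoinRoot.tensorAlgEquivMap _ f).toLinearEquiv.finrank_eq]
    refine finrank_quotient_span_eq_natDegree.trans ?_
    simpa [f] using natDegree_C_mul_X_pow_sub_X
      (pow_ne_zero _ ((map_ne_zero_iff _ (IsFractionRing.injective R K)).mpr hπ.ne_zero)) hp
  have hπk : algebraMap R k π = 0 := (IsLocalRing.residue_eq_zero_iff π).mpr hπ.not_isUnit
  have special_map : f.map (algebraMap R k) = -X := by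
    simp [f, hπk, (Nat.sub_pos_of_lt hp).ne']
  let special : k ⊗[R] AdjoinRoot f ≃ₐ[k] k :=
    (AdjoinRoot.tensorAlgEquivMap _ f).trans <|
      (AdjoinRoot.algEquivOfAssociated _ _ (X - C 0)
        (by rw [special_map, C_0, sub_zero]; exact (Associated.refl X).neg_left)).trans
        (quotientSpanXSubCAlgEquiv 0)
  have := IsDiscreteValuationRing.isTorsionFree_of_isSMulRegular hπ regular
  refine ⟨fun c hc => regular.right_eq_zero_of_smul (by rwa [Algebra.smul_def]), generic,
    ⟨special⟩, Module.not_finite_of_finrank_baseChange_ne K k ?_⟩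
  rw [generic, special.toLinearEquiv.finrank_eq, Module.finrank_self]
  exact hp.ne'

/-- Let `R` be a discrete valuation ring of characteristic `p > 0` with
uniformizer `π`, fraction field `K` and residue field `k`, and set
`C′ := R[z]/(π^{p−1} z^p − z)`.  Then: (1) `C′` has no `π`-torsion (so `C′` is flat over `R`);
(2) the generic fibre `K ⊗_R C′` has dimension `p` as a `K`-vector space; (3) the special fibre
`k ⊗_R C′` is isomorphic to `k` as a `k`-algebra; and (4) `C′` is NOT finitely generated as an
`R`-module.  (The group scheme `M` of Example 2.3 is flat and quasi-finite but not finite.) -/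
theorem quasifinite_group_scheme_M
    (R : Type*) [CommRing R] [IsDomain R] [IsDiscreteValuationRing R]
    (p : ℕ) [Fact p.Prime] [CharP R p]
    (π : R) (hπ : Irreducible π) :
    (∀ c : Polynomial R ⧸ Ideal.span ({C (π ^ (p - 1)) * X ^ p - X} : Set (Polynomial R)),
      algebraMap R
        (Polynomial R ⧸ Ideal.span ({C (π ^ (p - 1)) * X ^ p - X} : Set (Polynomial R))) π * c
          = 0 → c = 0) ∧
    Module.finrank (FractionRing R)
      ((FractionRing R) ⊗[R]
        (Polynomial R ⧸ Ideal.span ({C (π ^ (p - 1)) * X ^ p - X} : Set (Polynomial R)))) = p ∧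
    Nonempty
      (((IsLocalRing.ResidueField R) ⊗[R]
          (Polynomial R ⧸ Ideal.span ({C (π ^ (p - 1)) * X ^ p - X} : Set (Polynomial R))))
        ≃ₐ[IsLocalRing.ResidueField R] (IsLocalRing.ResidueField R)) ∧
    ¬ Module.Finite R
        (Polynomial R ⧸ Ideal.span ({C (π ^ (p - 1)) * X ^ p - X} : Set (Polynomial R))) :=
  quasifinite_group_scheme_M_general R p π hπ
end

section
/- Let R be a discrete valuation ring of characteristic p > 0 (p prime) with uniformizer π, and set C′ := R[z]/(π^{p−1} z^p − z). Then there exists a Hopf algebra structure over R on C′ whose comultiplication Δ satisfies Δ(z̄) = z̄ ⊗ 1 + 1 ⊗ z̄, whose counit ε satisfies ε(z̄) = 0, and whose antipode S satisfies S(z̄) = −z̄, where z̄ denotes the class of z in C′. (In particular Δ is well defined: π^{p−1}(z̄⊗1 + 1⊗z̄)^p − (z̄⊗1 + 1⊗z̄) = 0 in C′ ⊗_R C′, using that (u+v)^p = u^p + v^p in characteristic p.) -/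
/-!
A polynomial `f` over `R` is additive when `f(x + y) = f(x) + f(y)` in every commutative
`R`-algebra. Then `Spec (R[X] ⧸ (f))` is the kernel of `f : 𝔾ₐ → 𝔾ₐ`, so the Hopf structure of
`𝔾ₐ` (`X ↦ X ⊗ 1 + 1 ⊗ X`, `X ↦ 0`, `X ↦ -X`) descends to the quotient: each structure map is
the lift of an evaluation at a root of `f`, and each Hopf law is an identity of algebra maps out
of `AdjoinRoot f`, hence only needs checking on the root. In characteristic `p` the polynomial
`π ^ (p - 1) * X ^ p - X` is additive because Frobenius is.
-/

open Polynomial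
open scoped TensorProduct

universe u

namespace Polynomial

variable {R : Type u} [CommRing R]

/-- Quantifying over algebras in the universe of `R` suffices: `AdjoinRoot f ⊗[R] AdjoinRoot f`
lives there. -/
def IsAdditive (f : R[X]) : Prop :=
  ∀ ⦃B : Type u⦄ [CommRing B] [Algebra R B] (x y : B), aeval (x + y) f = aeval x f + aeval y f

theorem add_pow_char_of_algebra (p : ℕ) [Fact p.Prime] [CharP R p] {B : Type*} [CommRing B]
    [Algebra R B] (x y : B) : (x + y) ^ p = x ^ p + y ^ p := by
  have hp : (p : B) = 0 := by
    rw [← map_natCast (algebraMap R B), CharP.cast_eq_zero, map_zero]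
  rw [add_pow_prime_eq' Fact.out, hp, zero_mul, add_zero]

theorem isAdditive_C_mul_X_pow_char_sub_X (p : ℕ) [Fact p.Prime] [CharP R p] (c : R) :
    (C c * X ^ p - X).IsAdditive := by
  intro B _ _ x y
  simp only [map_sub, map_mul, aeval_C, map_pow, aeval_X, add_pow_char_of_algebra (R := R) p]
  ring

namespace IsAdditive

variable {f : R[X]} (hf : f.IsAdditive)
include hf

theorem aeval_zero {B : Type u} [CommRing B] [Algebra R B] : aeval (0 : B) f = 0 := by
  simpa using hf (0 : B) 0

theorem aeval_neg {B : Type u} [CommRing B] [Algebra R B] (x : B) :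
    aeval (-x) f = -aeval x f := by
  rw [eq_neg_iff_add_eq_zero, add_comm, ← hf, add_neg_cancel, hf.aeval_zero]

open AdjoinRoot

noncomputable def counit : AdjoinRoot f →ₐ[R] R :=
  liftAlgHom f (Algebra.ofId R R) 0 hf.aeval_zero

noncomputable def antipode : AdjoinRoot f →ₐ[R] AdjoinRoot f :=
  liftAlgHom f (Algebra.ofId R _) (-root f) (show aeval (-root f) f = 0 by
    rw [hf.aeval_neg, aeval_eq, mk_self, neg_zero])

noncomputable def comul : AdjoinRoot f →ₐ[R] AdjoinRoot f ⊗[R] AdjoinRoot f :=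
  liftAlgHom f (Algebra.ofId R _) (root f ⊗ₜ 1 + 1 ⊗ₜ root f) (show aeval _ f = 0 by
    rw [hf, ← Algebra.TensorProduct.includeLeft_apply (S := R),
      ← Algebra.TensorProduct.includeRight_apply, aeval_algHom_eq_zero, aeval_algHom_eq_zero,
      add_zero])

@[simp] theorem counit_root : hf.counit (root f) = 0 := liftAlgHom_root ..

@[simp] theorem antipode_root : hf.antipode (root f) = -root f := liftAlgHom_root ..

@[simp] theorem comul_root : hf.comul (root f) = root f ⊗ₜ 1 + 1 ⊗ₜ root f :=
  liftAlgHom_root ..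

theorem coassoc :
    (Algebra.TensorProduct.assoc R R R _ _ _).toAlgHom.comp
        ((Algebra.TensorProduct.map hf.comul (.id R _)).comp hf.comul) =
      (Algebra.TensorProduct.map (.id R _) hf.comul).comp hf.comul := by
  ext
  simp [TensorProduct.add_tmul, TensorProduct.tmul_add, Algebra.TensorProduct.one_def]
  abel

theorem counit_rTensor_comul :
    (Algebra.TensorProduct.map hf.counit (.id R _)).comp hf.comul =
      (Algebra.TensorProduct.lid R (AdjoinRoot f)).symm := by
  ext
  simp

theorem counit_lTensor_comul :
    (Algebra.TensorProduct.map (.id R _) hf.counit).comp hf.comul =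
      (Algebra.TensorProduct.rid R R (AdjoinRoot f)).symm := by
  ext
  simp

theorem mul_antipode_rTensor_comul :
    (Algebra.TensorProduct.lift hf.antipode (.id R _) fun _ _ ↦ .all _ _).comp hf.comul =
      (Algebra.ofId R _).comp hf.counit := by
  ext
  simp

theorem mul_antipode_lTensor_comul :
    (Algebra.TensorProduct.lift (.id R _) hf.antipode fun _ _ ↦ .all _ _).comp hf.comul =
      (Algebra.ofId R _).comp hf.counit := by
  ext
  simp

noncomputable abbrev bialgebra : Bialgebra R (AdjoinRoot f) :=
  .ofAlgHom hf.comul hf.counit hf.coassoc hf.counit_rTensor_comul hf.counit_lTensor_comul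

noncomputable abbrev hopfAlgebra : HopfAlgebra R (AdjoinRoot f) :=
  letI := hf.bialgebra
  .ofAlgHom hf.antipode hf.mul_antipode_rTensor_comul hf.mul_antipode_lTensor_comul

theorem exists_hopf_structure_adjoinRoot :
    ∃ (Δ : AdjoinRoot f →ₗ[R] AdjoinRoot f ⊗[R] AdjoinRoot f) (ε : AdjoinRoot f →ₗ[R] R)
      (S : AdjoinRoot f →ₗ[R] AdjoinRoot f),
      (∀ x y, Δ (x * y) = Δ x * Δ y) ∧ Δ 1 = 1 ∧
      (∀ x y, ε (x * y) = ε x * ε y) ∧ ε 1 = 1 ∧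
      (∀ x, TensorProduct.assoc R _ _ _ (TensorProduct.map Δ LinearMap.id (Δ x)) =
        TensorProduct.map LinearMap.id Δ (Δ x)) ∧
      (∀ x, TensorProduct.lid R _ (TensorProduct.map ε LinearMap.id (Δ x)) = x) ∧
      (∀ x, TensorProduct.rid R _ (TensorProduct.map LinearMap.id ε (Δ x)) = x) ∧
      (∀ x, LinearMap.mul' R _ (TensorProduct.map S LinearMap.id (Δ x)) =
        algebraMap R _ (ε x)) ∧
      (∀ x, LinearMap.mul' R _ (TensorProduct.map LinearMap.id S (Δ x)) =
        algebraMap R _ (ε x)) ∧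
      Δ (root f) = root f ⊗ₜ[R] 1 + 1 ⊗ₜ[R] root f ∧ ε (root f) = 0 ∧ S (root f) = -root f := by
  let _ := hf.hopfAlgebra
  refine ⟨Coalgebra.comul, Coalgebra.counit, HopfAlgebra.antipode R, Bialgebra.comul_mul,
    Bialgebra.comul_one, Bialgebra.counit_mul, Bialgebra.counit_one, Coalgebra.coassoc_apply,
    fun x ↦ ?_, fun x ↦ ?_, HopfAlgebra.mul_antipode_rTensor_comul_apply,
    HopfAlgebra.mul_antipode_lTensor_comul_apply, hf.comul_root, hf.counit_root,
    hf.antipode_root⟩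
  · rw [← LinearMap.rTensor_def, Coalgebra.rTensor_counit_comul, TensorProduct.lid_tmul, one_smul]
  · rw [← LinearMap.lTensor_def, Coalgebra.lTensor_counit_comul, TensorProduct.rid_tmul, one_smul]

end IsAdditive

end Polynomial

theorem hopf_structure_on_M_general
    (R : Type*) [CommRing R]
    (p : ℕ) [Fact p.Prime] [CharP R p]
    (π : R) :
    ∃ (Δ : (Polynomial R ⧸ Ideal.span ({C (π ^ (p - 1)) * X ^ p - X} : Set (Polynomial R)))
            →ₗ[R] (Polynomial R ⧸ Ideal.span ({C (π ^ (p - 1)) * X ^ p - X} : Set (Polynomial R)))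
                ⊗[R] (Polynomial R ⧸ Ideal.span ({C (π ^ (p - 1)) * X ^ p - X} : Set (Polynomial R))))
      (ε : (Polynomial R ⧸ Ideal.span ({C (π ^ (p - 1)) * X ^ p - X} : Set (Polynomial R))) →ₗ[R] R)
      (S : (Polynomial R ⧸ Ideal.span ({C (π ^ (p - 1)) * X ^ p - X} : Set (Polynomial R)))
            →ₗ[R] (Polynomial R ⧸ Ideal.span ({C (π ^ (p - 1)) * X ^ p - X} : Set (Polynomial R)))),
      -- `Δ` is an algebra homomorphism
      (∀ x y, Δ (x * y) = Δ x * Δ y) ∧ Δ 1 = 1 ∧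
      -- `ε` is an algebra homomorphism
      (∀ x y, ε (x * y) = ε x * ε y) ∧ ε 1 = 1 ∧
      -- coassociativity
      (∀ x, TensorProduct.assoc R _ _ _ (TensorProduct.map Δ LinearMap.id (Δ x)) =
        TensorProduct.map LinearMap.id Δ (Δ x)) ∧
      -- left and right counit laws
      (∀ x, TensorProduct.lid R _ (TensorProduct.map ε LinearMap.id (Δ x)) = x) ∧
      (∀ x, TensorProduct.rid R _ (TensorProduct.map LinearMap.id ε (Δ x)) = x) ∧
      -- antipode laws
      (∀ x, LinearMap.mul' R _ (TensorProduct.map S LinearMap.id (Δ x)) =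
        algebraMap R _ (ε x)) ∧
      (∀ x, LinearMap.mul' R _ (TensorProduct.map LinearMap.id S (Δ x)) =
        algebraMap R _ (ε x)) ∧
      -- values on the generator `z̄`
      Δ (Ideal.Quotient.mk _ X) =
        (Ideal.Quotient.mk _ X) ⊗ₜ[R] 1 + 1 ⊗ₜ[R] (Ideal.Quotient.mk _ X) ∧
      ε (Ideal.Quotient.mk _ X) = 0 ∧
      S (Ideal.Quotient.mk _ X) = - (Ideal.Quotient.mk _ X) :=
  (isAdditive_C_mul_X_pow_char_sub_X p (π ^ (p - 1))).exists_hopf_structure_adjoinRoot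

/-- Let `R` be a discrete valuation ring of characteristic `p > 0` with
uniformizer `π`, and set `C′ := R[z]/(π^{p−1} z^p − z)`.  Then there exists a Hopf algebra
structure over `R` on `C′` (given by a comultiplication `Δ`, a counit `ε` and an antipode `S`
which are `R`-linear, with `Δ` and `ε` algebra homomorphisms, satisfying coassociativity, the
counit laws and the antipode laws) such that `Δ(z̄) = z̄ ⊗ 1 + 1 ⊗ z̄`, `ε(z̄) = 0` and
`S(z̄) = −z̄`, where `z̄` is the class of `z` in `C′`. -/
theorem hopf_structure_on_M
    (R : Type*) [CommRing R] [IsDomain R] [IsDiscreteValuationRing R]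
    (p : ℕ) [Fact p.Prime] [CharP R p]
    (π : R) (hπ : Irreducible π) :
    ∃ (Δ : (Polynomial R ⧸ Ideal.span ({C (π ^ (p - 1)) * X ^ p - X} : Set (Polynomial R)))
            →ₗ[R] (Polynomial R ⧸ Ideal.span ({C (π ^ (p - 1)) * X ^ p - X} : Set (Polynomial R)))
                ⊗[R] (Polynomial R ⧸ Ideal.span ({C (π ^ (p - 1)) * X ^ p - X} : Set (Polynomial R))))
      (ε : (Polynomial R ⧸ Ideal.span ({C (π ^ (p - 1)) * X ^ p - X} : Set (Polynomial R))) →ₗ[R] R)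
      (S : (Polynomial R ⧸ Ideal.span ({C (π ^ (p - 1)) * X ^ p - X} : Set (Polynomial R)))
            →ₗ[R] (Polynomial R ⧸ Ideal.span ({C (π ^ (p - 1)) * X ^ p - X} : Set (Polynomial R)))),
      -- `Δ` is an algebra homomorphism
      (∀ x y, Δ (x * y) = Δ x * Δ y) ∧ Δ 1 = 1 ∧
      -- `ε` is an algebra homomorphism
      (∀ x y, ε (x * y) = ε x * ε y) ∧ ε 1 = 1 ∧
      -- coassociativity
      (∀ x, TensorProduct.assoc R _ _ _ (TensorProduct.map Δ LinearMap.id (Δ x)) =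
        TensorProduct.map LinearMap.id Δ (Δ x)) ∧
      -- left and right counit laws
      (∀ x, TensorProduct.lid R _ (TensorProduct.map ε LinearMap.id (Δ x)) = x) ∧
      (∀ x, TensorProduct.rid R _ (TensorProduct.map LinearMap.id ε (Δ x)) = x) ∧
      -- antipode laws
      (∀ x, LinearMap.mul' R _ (TensorProduct.map S LinearMap.id (Δ x)) =
        algebraMap R _ (ε x)) ∧
      (∀ x, LinearMap.mul' R _ (TensorProduct.map LinearMap.id S (Δ x)) =
        algebraMap R _ (ε x)) ∧
      -- values on the generator `z̄`
      Δ (Ideal.Quotient.mk _ X) =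
        (Ideal.Quotient.mk _ X) ⊗ₜ[R] 1 + 1 ⊗ₜ[R] (Ideal.Quotient.mk _ X) ∧
      ε (Ideal.Quotient.mk _ X) = 0 ∧
      S (Ideal.Quotient.mk _ X) = - (Ideal.Quotient.mk _ X) :=
  hopf_structure_on_M_general R p π
end
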